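/- Let f ∈ C∞([0,L]) with f(0) = f(L) = 0, and let n ≥ 1. Then there exist f₁, f₂ ∈ C∞([0,L]) with f₁(0) = f₁(L) = f₂(0) = f₂(L) = 0 and f = f₁ + f₂, such that f₁⁽²ʲ⁻¹⁾₊(0) = f₁⁽²ʲ⁻¹⁾₋(L) = 0 and f₂⁽²ʲ⁾₊(0) = f₂⁽²ʲ⁾₋(L) = 0 for all 1 ≤ j ≤ n. -/
import Mathlib


open Polynomial

lemma exists_poly_hermite (N : ℕ) {x y : ℝ} (hxy : x ≠ y) (a b : Fin N → ℝ) :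
    ∃ p : Polynomial ℝ,
      (∀ k : Fin N, (Polynomial.derivative^[(k : ℕ)] p).eval x = a k) ∧
      (∀ k : Fin N, (Polynomial.derivative^[(k : ℕ)] p).eval y = b k) := by
  rcases Nat.eq_zero_or_pos N with hN | hN
  · subst hN
    exact ⟨0, fun k => k.elim0, fun k => k.elim0⟩
  obtain ⟨m, rfl⟩ : ∃ m, N = m + 1 := ⟨N - 1, by omega⟩
  -- the evaluation map
  haveI : FiniteDimensional ℝ (Polynomial.degreeLT ℝ ((2 * (m + 1)))) :=
    (Polynomial.degreeLTEquiv ℝ ((2 * (m + 1)))).symm.finiteDimensional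
  let T : Polynomial.degreeLT ℝ ((2 * (m + 1))) →ₗ[ℝ] ((Fin (m + 1) → ℝ) × (Fin (m + 1) → ℝ)) :=
    LinearMap.prod
      (LinearMap.pi fun k : Fin (m + 1) =>
        (Polynomial.leval x) ∘ₗ (Polynomial.derivative ^ (k : ℕ)) ∘ₗ
          (Polynomial.degreeLT ℝ ((2 * (m + 1)))).subtype)
      (LinearMap.pi fun k : Fin (m + 1) =>
        (Polynomial.leval y) ∘ₗ (Polynomial.derivative ^ (k : ℕ)) ∘ₗ
          (Polynomial.degreeLT ℝ ((2 * (m + 1)))).subtype)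
  have hTapp : ∀ (p : Polynomial.degreeLT ℝ ((2 * (m + 1)))) (k : Fin (m + 1)),
      (T p).1 k = (Polynomial.derivative^[(k : ℕ)] (p : ℝ[X])).eval x ∧
      (T p).2 k = (Polynomial.derivative^[(k : ℕ)] (p : ℝ[X])).eval y := by
    intro p k
    constructor <;>
      simp [T, Module.End.pow_apply, Polynomial.leval_apply]
  have hinj : Function.Injective T := by
    rw [← LinearMap.ker_eq_bot]
    rw [LinearMap.ker_eq_bot']
    intro p hp
    by_contra hp0
    have hpne : (p : ℝ[X]) ≠ 0 := by
      simpa [Submodule.coe_eq_zero] using hp0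
    have hrootx : ∀ j ≤ m, (Polynomial.derivative^[j] (p : ℝ[X])).IsRoot x := by
      intro j hj
      have := (hTapp p ⟨j, by omega⟩).1
      rw [hp] at this
      simpa [Polynomial.IsRoot] using this.symm
    have hrooty : ∀ j ≤ m, (Polynomial.derivative^[j] (p : ℝ[X])).IsRoot y := by
      intro j hj
      have := (hTapp p ⟨j, by omega⟩).2
      rw [hp] at this
      simpa [Polynomial.IsRoot] using this.symm
    have hfact : ((m.factorial : ℝ)) ∈ nonZeroDivisors ℝ :=
      mem_nonZeroDivisors_of_ne_zero (by exact_mod_cast m.factorial_ne_zero)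
    have hmx : m < (p : ℝ[X]).rootMultiplicity x :=
      Polynomial.lt_rootMultiplicity_of_isRoot_iterate_derivative_of_mem_nonZeroDivisors
        hpne hrootx hfact
    have hmy : m < (p : ℝ[X]).rootMultiplicity y :=
      Polynomial.lt_rootMultiplicity_of_isRoot_iterate_derivative_of_mem_nonZeroDivisors
        hpne hrooty hfact
    have hdvdx : (X - C x) ^ (m + 1) ∣ (p : ℝ[X]) :=
      dvd_trans (pow_dvd_pow _ hmx) ((p : ℝ[X]).pow_rootMultiplicity_dvd x)
    have hdvdy : (X - C y) ^ (m + 1) ∣ (p : ℝ[X]) :=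
      dvd_trans (pow_dvd_pow _ hmy) ((p : ℝ[X]).pow_rootMultiplicity_dvd y)
    have hcop : IsCoprime ((X - C x) ^ (m + 1)) ((X - C y) ^ (m + 1)) :=
      (Polynomial.isCoprime_X_sub_C_of_isUnit_sub
        ((sub_ne_zero_of_ne hxy).isUnit)).pow
    have hdvd : (X - C x) ^ (m + 1) * (X - C y) ^ (m + 1) ∣ (p : ℝ[X]) := hcop.mul_dvd hdvdx hdvdy
    have hdeg : ((X - C x) ^ (m + 1) * (X - C y) ^ (m + 1)).natDegree ≤ (p : ℝ[X]).natDegree :=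
      Polynomial.natDegree_le_of_dvd hdvd hpne
    have h1 : ((X - C x) ^ (m + 1) * (X - C y) ^ (m + 1)).natDegree = (2 * (m + 1)) := by
      rw [Polynomial.natDegree_mul (pow_ne_zero _ (Polynomial.X_sub_C_ne_zero x))
        (pow_ne_zero _ (Polynomial.X_sub_C_ne_zero y)),
        Polynomial.natDegree_pow, Polynomial.natDegree_pow]
      simp [Polynomial.natDegree_X_sub_C]
      ring
    have h2 : (p : ℝ[X]).natDegree < 2 * (m + 1) := by
      have := Polynomial.mem_degreeLT.mp p.2
      rwa [← Polynomial.natDegree_lt_iff_degree_lt hpne] at this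
    omega
  have hsurj : Function.Surjective T := by
    refine (LinearMap.injective_iff_surjective_of_finrank_eq_finrank ?_).mp hinj
    rw [(Polynomial.degreeLTEquiv ℝ ((2 * (m + 1)))).finrank_eq, Module.finrank_prod,
      Module.finrank_fin_fun, Module.finrank_fin_fun]
    omega
  obtain ⟨p, hpab⟩ := hsurj (a, b)
  refine ⟨(p : ℝ[X]), fun k => ?_, fun k => ?_⟩
  · rw [← (hTapp p k).1, hpab]
  · rw [← (hTapp p k).2, hpab]

/-- any f ∈ C∞([0,L]) with f(0)=f(L)=0 decomposes, for given
n ≥ 1, as f = f₁ + f₂ with f₁, f₂ ∈ C∞([0,L]) vanishing at the endpoints,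
where the odd-order one-sided derivatives of f₁ of orders 2j-1 (1 ≤ j ≤ n)
vanish at 0 and L, and the even-order one-sided derivatives of f₂ of orders
2j (1 ≤ j ≤ n) vanish at 0 and L. Smoothness is encoded via sequences of
continuous extensions of iterated derivatives. -/
theorem smooth_decomposition_odd_even_orders (L : ℝ) (hL : 0 < L)
    (n : ℕ) (hn : 1 ≤ n)
    (f : ℝ → ℝ) (r : ℕ → ℝ → ℝ) (hr0 : r 0 = f)
    (hrc : ∀ i, ContinuousOn (r i) (Set.Icc 0 L))
    (hrd : ∀ i, ∀ x ∈ Set.Ioo 0 L, HasDerivAt (r i) (r (i + 1) x) x)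
    (h0 : f 0 = 0) (hLv : f L = 0) :
    ∃ (f₁ f₂ : ℝ → ℝ) (s t : ℕ → ℝ → ℝ),
      s 0 = f₁ ∧ t 0 = f₂ ∧
      (∀ i, ContinuousOn (s i) (Set.Icc 0 L)) ∧
      (∀ i, ContinuousOn (t i) (Set.Icc 0 L)) ∧
      (∀ i, ∀ x ∈ Set.Ioo 0 L, HasDerivAt (s i) (s (i + 1) x) x) ∧
      (∀ i, ∀ x ∈ Set.Ioo 0 L, HasDerivAt (t i) (t (i + 1) x) x) ∧
      (∀ x ∈ Set.Icc 0 L, f x = f₁ x + f₂ x) ∧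
      f₁ 0 = 0 ∧ f₁ L = 0 ∧ f₂ 0 = 0 ∧ f₂ L = 0 ∧
      (∀ j, 1 ≤ j → j ≤ n →
        s (2 * j - 1) 0 = 0 ∧ s (2 * j - 1) L = 0 ∧
        t (2 * j) 0 = 0 ∧ t (2 * j) L = 0) := by
  have hxy : (0 : ℝ) ≠ L := hL.ne
  set N := 2 * n + 1 with hNdef
  obtain ⟨p, hx, hy⟩ := exists_poly_hermite N hxy
    (fun k => if Odd (k : ℕ) then r k 0 else 0)
    (fun k => if Odd (k : ℕ) then r k L else 0)
  refine ⟨fun z => r 0 z - (Polynomial.derivative^[0] p).eval z,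
    fun z => (Polynomial.derivative^[0] p).eval z,
    fun i z => r i z - (Polynomial.derivative^[i] p).eval z,
    fun i z => (Polynomial.derivative^[i] p).eval z,
    rfl, rfl, ?_, ?_, ?_, ?_, ?_, ?_, ?_, ?_, ?_, ?_⟩
  · exact fun i => (hrc i).sub (Polynomial.continuous _).continuousOn
  · exact fun i => (Polynomial.continuous _).continuousOn
  · intro i x hxm
    exact (hrd i x hxm).sub
      (by simpa [Function.iterate_succ_apply'] using
        (Polynomial.hasDerivAt (Polynomial.derivative^[i] p) x))
  · intro i x hxm
    simpa [Function.iterate_succ_apply'] using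
      (Polynomial.hasDerivAt (Polynomial.derivative^[i] p) x)
  · intro x _; simp [hr0]
  · have := hx ⟨0, by omega⟩
    simp only [Fin.val_mk, Function.iterate_zero, id] at this
    rw [if_neg (by simp [Nat.odd_iff])] at this
    simp [this, hr0, h0]
  · have := hy ⟨0, by omega⟩
    simp only [Fin.val_mk, Function.iterate_zero, id] at this
    rw [if_neg (by simp [Nat.odd_iff])] at this
    simp [this, hr0, hLv]
  · have := hx ⟨0, by omega⟩
    simp only [Fin.val_mk, Function.iterate_zero, id] at this
    rw [if_neg (by simp [Nat.odd_iff])] at this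
    simp [this]
  · have := hy ⟨0, by omega⟩
    simp only [Fin.val_mk, Function.iterate_zero, id] at this
    rw [if_neg (by simp [Nat.odd_iff])] at this
    simp [this]
  · intro j hj1 hjn
    have hodd : Odd (2 * j - 1) := ⟨j - 1, by omega⟩
    have heven : ¬ Odd (2 * j) := by simp [Nat.odd_iff]
    have h1 := hx ⟨2 * j - 1, by omega⟩
    have h2 := hy ⟨2 * j - 1, by omega⟩
    have h3 := hx ⟨2 * j, by omega⟩
    have h4 := hy ⟨2 * j, by omega⟩
    simp only [Fin.val_mk] at h1 h2 h3 h4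
    rw [if_pos hodd] at h1 h2
    rw [if_neg heven] at h3 h4
    refine ⟨?_, ?_, ?_, ?_⟩ <;> simp [h1, h2, h3, h4]
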